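/- Consider the MVNP-to-WSP reduction construction: replace the sink t of G by, for each predecessor v of t lying on an s–t path of cost < h, a set U_v of |V| leaf vertices, each connected from v by an arc of cost t_{vt}. Let S ⊆ V \ {s,t} with |S| ≤ k be such that d_{G\S}(s,t) ≥ h. Then in the constructed graph, for the allocation protecting exactly S with delay Δ = h, every leaf vertex u in ∪_v U_v has delayed arrival time at least h. -/

import Mathlib

/-!
A path in `Ĝ` from `s` to a leaf is a path of `G` avoiding `t`, followed by one leaf arc; sending
every leaf back to `t` turns it into an `s`–`t` path of `G` with the same undelayed cost. If that
path avoids `S`, it is a path of `G \ S`, so its cost is already at least `h`. Otherwise it leaves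
some protected vertex before its last step, and that arc alone carries the delay `h`.
-/

open scoped ENNReal

/-- `l` is a directed path from `u` to `v` along arc relation `A`. -/
def IsPathFrom {V : Type*} (A : V → V → Prop) (u v : V) (l : List V) : Prop :=
  l.head? = some u ∧ l.getLast? = some v ∧ l.Chain' A

/-- Total cost of a path: sum of arc costs over consecutive pairs. -/
def pathCost {V : Type*} (c : V → V → ℝ) (l : List V) : ℝ :=
  ((l.zip l.tail).map fun p => c p.1 p.2).sum

/-- Shortest-path distance from `u` to `v` (infimum of path costs, `⊤` if unreachable). -/
noncomputable def gdist {V : Type*} (A : V → V → Prop) (c : V → V → ℝ) (u v : V) : ℝ≥0∞ :=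
  ⨅ l : {l : List V // IsPathFrom A u v l}, ENNReal.ofReal (pathCost c l)

open Classical in
/-- Arc costs after protecting the vertices of `P`: every outgoing arc of a
protected vertex is delayed by `Δ`. -/
noncomputable def delCost {V : Type*} (c : V → V → ℝ) (P : Set V) (Δ : ℝ) : V → V → ℝ :=
  fun u v => c u v + (if u ∈ P then Δ else 0)

/-- Arc relation of the graph `Ĝ` of the MVNP-to-WSP reduction: the sink `t` is
replaced, for each predecessor `v` of `t` lying on an `s`–`t` path of cost `< h`,
by `|V|` leaf vertices `Sum.inr (v, i)` (`i : V`), each reached from `v` by an arc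
of cost `t_{vt}`. -/
noncomputable def hatArc {V : Type*} (A : V → V → Prop) (c : V → V → ℝ)
    (s tv : V) (h : ℝ) : (V ⊕ V × V) → (V ⊕ V × V) → Prop
  | Sum.inl x, Sum.inl y => A x y ∧ x ≠ tv ∧ y ≠ tv
  | Sum.inl x, Sum.inr q =>
      x = q.1 ∧ A q.1 tv ∧ gdist A c s q.1 + ENNReal.ofReal (c q.1 tv) < ENNReal.ofReal h
  | _, _ => False

/-- Arc costs of the reduction graph `Ĝ`. -/
noncomputable def hatCost {V : Type*} (c : V → V → ℝ) (tv : V) :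
    (V ⊕ V × V) → (V ⊕ V × V) → ℝ
  | Sum.inl x, Sum.inl y => c x y
  | Sum.inl x, Sum.inr _ => c x tv
  | _, _ => 0

section PathCost

variable {V W : Type*}

@[simp]
lemma pathCost_nil (c : V → V → ℝ) : pathCost c [] = 0 := rfl

@[simp]
lemma pathCost_singleton (c : V → V → ℝ) (a : V) : pathCost c [a] = 0 := rfl

@[simp]
lemma pathCost_cons_cons (c : V → V → ℝ) (a b : V) (l : List V) :
    pathCost c (a :: b :: l) = c a b + pathCost c (b :: l) := by
  simp [pathCost]

lemma pathCost_nonneg {R : V → V → Prop} {c : V → V → ℝ}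
    (hc : ∀ a b, R a b → 0 ≤ c a b) :
    ∀ {l : List V}, l.IsChain R → 0 ≤ pathCost c l
  | [], _ | [_], _ => le_rfl
  | a :: b :: l, hl => by
    rw [List.isChain_cons_cons] at hl
    rw [pathCost_cons_cons]
    exact add_nonneg (hc a b hl.1) (pathCost_nonneg hc hl.2)

lemma pathCost_map {R : V → V → Prop} {c : V → V → ℝ} {c' : W → W → ℝ} {f : V → W}
    (hc : ∀ a b, R a b → c a b = c' (f a) (f b)) :
    ∀ {l : List V}, l.IsChain R → pathCost c l = pathCost c' (l.map f)
  | [], _ | [_], _ => rfl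
  | a :: b :: l, hl => by
    rw [List.isChain_cons_cons] at hl
    rw [List.map_cons, List.map_cons, pathCost_cons_cons, pathCost_cons_cons, hc a b hl.1,
      ← List.map_cons, ← pathCost_map hc hl.2]

lemma pathCost_le_pathCost_delCost (c : V → V → ℝ) (P : Set V) {Δ : ℝ} (hΔ : 0 ≤ Δ) :
    ∀ l : List V, pathCost c l ≤ pathCost (delCost c P Δ) l
  | [] | [_] => le_rfl
  | a :: b :: l => by
    have : c a b ≤ delCost c P Δ a b := by
      unfold delCost
      split_ifs <;> linarith
    simpa only [pathCost_cons_cons] using add_le_add this (pathCost_le_pathCost_delCost c P hΔ _)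

lemma le_pathCost_delCost {R : V → V → Prop} {c : V → V → ℝ}
    (hc : ∀ a b, R a b → 0 ≤ c a b) {P : Set V} {Δ : ℝ} (hΔ : 0 ≤ Δ) {a : V}
    (haP : a ∈ P) :
    ∀ {l : List V}, l.IsChain R → a ∈ l.dropLast → Δ ≤ pathCost (delCost c P Δ) l
  | [], _, ha | [_], _, ha => by simp at ha
  | x :: y :: l, hl, ha => by
    rw [List.isChain_cons_cons] at hl
    have hdc : ∀ a b, R a b → 0 ≤ delCost c P Δ a b := fun a b hab => by
      unfold delCost
      split_ifs <;> linarith [hc a b hab]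
    rw [pathCost_cons_cons]
    rcases List.mem_cons.mp (by simpa using ha) with rfl | ha
    · have : delCost c P Δ a y = c a y + Δ := by simp [delCost, haP]
      linarith [hc a y hl.1, pathCost_nonneg hdc hl.2]
    · linarith [hdc x y hl.1, le_pathCost_delCost hc hΔ haP hl.2 ha]

end PathCost

section Distance

variable {V : Type*} {A : V → V → Prop} {c : V → V → ℝ} {u v : V}

lemma le_gdist_iff {x : ℝ≥0∞} :
    x ≤ gdist A c u v ↔ ∀ l, IsPathFrom A u v l → x ≤ ENNReal.ofReal (pathCost c l) := by
  simp only [gdist, le_iInf_iff, Subtype.forall]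

lemma gdist_le_pathCost {l : List V} (hl : IsPathFrom A u v l) :
    gdist A c u v ≤ ENNReal.ofReal (pathCost c l) :=
  iInf_le (fun l : {l // IsPathFrom A u v l} => ENNReal.ofReal (pathCost c l)) ⟨l, hl⟩

end Distance

section Reduction

variable {V : Type*}

def collapseLeaves (tv : V) : V ⊕ V × V → V :=
  Sum.elim id fun _ => tv

variable {A : V → V → Prop} {c : V → V → ℝ} {s tv : V} {h : ℝ}

lemma hatArc.collapseLeaves {a b : V ⊕ V × V} (hab : hatArc A c s tv h a b) :
    A (collapseLeaves tv a) (collapseLeaves tv b) := by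
  rcases a with x | q <;> rcases b with y | r
  · exact hab.1
  · obtain ⟨rfl, hA, -⟩ := hab
    exact hA
  all_goals exact hab.elim

lemma hatCost_eq_of_hatArc {a b : V ⊕ V × V} (hab : hatArc A c s tv h a b) :
    hatCost c tv a b = c (collapseLeaves tv a) (collapseLeaves tv b) := by
  rcases a with x | q <;> rcases b with y | r
  · rfl
  · obtain ⟨rfl, -, -⟩ := hab
    rfl
  all_goals exact hab.elim

lemma hatCost_nonneg (hc : ∀ u v, A u v → 0 ≤ c u v) {a b : V ⊕ V × V}
    (hab : hatArc A c s tv h a b) : 0 ≤ hatCost c tv a b :=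
  hatCost_eq_of_hatArc hab ▸ hc _ _ hab.collapseLeaves

lemma pathCost_hatCost {l : List (V ⊕ V × V)} (hl : l.IsChain (hatArc A c s tv h)) :
    pathCost (hatCost c tv) l = pathCost c (l.map (collapseLeaves tv)) :=
  pathCost_map (R := hatArc A c s tv h) (fun _ _ => hatCost_eq_of_hatArc) hl

lemma isPathFrom_map_collapseLeaves {S : Set V} {u : V} {q : V × V} {l : List (V ⊕ V × V)}
    (hl : IsPathFrom (hatArc A c s tv h) (Sum.inl u) (Sum.inr q) l)
    (hS : ∀ x ∈ l.map (collapseLeaves tv), x ∉ S) :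
    IsPathFrom (fun u v => A u v ∧ u ∉ S ∧ v ∉ S) u tv (l.map (collapseLeaves tv)) := by
  obtain ⟨hhead, hlast, hchain : l.IsChain (hatArc A c s tv h)⟩ := hl
  have hA : (l.map (collapseLeaves tv)).IsChain A :=
    List.isChain_map_of_isChain (collapseLeaves tv) (fun _ _ => hatArc.collapseLeaves) hchain
  exact ⟨by simp [hhead, collapseLeaves], by simp [hlast, collapseLeaves],
    hA.imp_of_mem_imp fun x y hx hy hxy => ⟨hxy, hS x hx, hS y hy⟩⟩

end Reduction

theorem reduction_leaves_saved_general {V : Type*} (A : V → V → Prop)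
    (t : V → V → ℝ) (hpos : ∀ u v, A u v → 0 < t u v)
    (s tv : V) (h : ℝ) (hh : 0 < h)
    (S : Set V) (ht : tv ∉ S)
    (hdist : ENNReal.ofReal h ≤ gdist (fun u v => A u v ∧ u ∉ S ∧ v ∉ S) t s tv) :
    ∀ v i : V,
      ENNReal.ofReal h ≤
        gdist (hatArc A t s tv h) (delCost (hatCost t tv) (Sum.inl '' S) h)
          (Sum.inl s) (Sum.inr (v, i)) := by
  intro v i
  rw [le_gdist_iff]
  intro l hl
  obtain ⟨-, hlast, hchain : l.IsChain (hatArc A t s tv h)⟩ := id hl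
  by_cases hsafe : ∀ x ∈ l.map (collapseLeaves tv), x ∉ S
  · calc ENNReal.ofReal h
        ≤ gdist (fun u v => A u v ∧ u ∉ S ∧ v ∉ S) t s tv := hdist
      _ ≤ ENNReal.ofReal (pathCost t (l.map (collapseLeaves tv))) :=
        gdist_le_pathCost (isPathFrom_map_collapseLeaves hl hsafe)
      _ ≤ _ := by
        rw [← pathCost_hatCost hchain]
        exact ENNReal.ofReal_le_ofReal (pathCost_le_pathCost_delCost _ _ hh.le l)
  · push Not at hsafe
    obtain ⟨_, hx, hxS⟩ := hsafe
    obtain ⟨a | q, hal, rfl⟩ := List.mem_map.mp hx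
    · have hdrop : Sum.inl a ∈ l.dropLast :=
        List.mem_dropLast_of_mem_of_ne_getLast? hal (by simp [hlast])
      exact ENNReal.ofReal_le_ofReal <| le_pathCost_delCost
        (fun _ _ => hatCost_nonneg fun u v huv => (hpos u v huv).le) hh.le
        (Set.mem_image_of_mem _ hxS) hchain hdrop
    · exact absurd hxS ht

/-- in the MVNP-to-WSP reduction, if `S ⊆ V \ {s,t}` with `|S| ≤ k`
satisfies `d_{G\S}(s,t) ≥ h`, then protecting `S` with delay `Δ = h` gives every
leaf vertex a delayed arrival time of at least `h`. -/
theorem reduction_leaves_saved {V : Type*} [Fintype V] (A : V → V → Prop)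
    (t : V → V → ℝ) (hpos : ∀ u v, A u v → 0 < t u v)
    (s tv : V) (hstv : s ≠ tv) (h : ℝ) (hh : 0 < h) (k : ℕ)
    (S : Set V) (hs : s ∉ S) (ht : tv ∉ S) (hk : S.ncard ≤ k)
    (hdist : ENNReal.ofReal h ≤ gdist (fun u v => A u v ∧ u ∉ S ∧ v ∉ S) t s tv) :
    ∀ v i : V,
      ENNReal.ofReal h ≤
        gdist (hatArc A t s tv h) (delCost (hatCost t tv) (Sum.inl '' S) h)
          (Sum.inl s) (Sum.inr (v, i)) :=
  reduction_leaves_saved_general A t hpos s tv h hh S ht hdist
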